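/- For any shift-invariant kernel k with normalized Fourier transform p (a probability density on R^d), the identity k(x_i − x_j) = E[2 cos(Ω^T x_i + B) cos(Ω^T x_j + B)] holds, where Ω has density p and B is uniform on [0,2π], independent of Ω. -/

import Mathlib

/-! Averaging over the phase kills the high-frequency term of the product-to-sum formula:
`2 cos (a + b) cos (c + b) = cos (a - c) + cos (a + c + 2 b)`, and the second summand has mean zero
over a period of `b`. What remains is `E[cos ⟪Ω, xi - xj⟫]`, the real part of the characteristic
function of `Ω` at `xi - xj`, which is `k (xi - xj)` because `k` is real. -/

open MeasureTheory Real
open scoped RealInnerProductSpace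

section Density

variable {α : Type*} [MeasurableSpace α] {μ : Measure α} {p : α → ℝ}

lemma isProbabilityMeasure_withDensity_ofReal (hpnn : ∀ ω, 0 ≤ p ω) (hpint : ∫ ω, p ω ∂μ = 1) :
    IsProbabilityMeasure (μ.withDensity fun ω => ENNReal.ofReal (p ω)) := by
  have hp : Integrable p μ := .of_integral_ne_zero (by simp [hpint])
  constructor
  rw [withDensity_apply _ MeasurableSet.univ, Measure.restrict_univ,
    ← ofReal_integral_eq_lintegral_ofReal hp (.of_forall hpnn), hpint, ENNReal.ofReal_one]

lemma integral_withDensity_ofReal {E : Type*} [NormedAddCommGroup E] [NormedSpace ℝ E]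
    (hp : AEMeasurable p μ) (hpnn : ∀ᵐ ω ∂μ, 0 ≤ p ω) (g : α → E) :
    ∫ ω, g ω ∂μ.withDensity (fun ω => ENNReal.ofReal (p ω)) = ∫ ω, p ω • g ω ∂μ := by
  rw [integral_withDensity_eq_integral_toReal_smul₀ hp.ennreal_ofReal
    (.of_forall fun _ => ENNReal.ofReal_lt_top)]
  refine integral_congr_ae ?_
  filter_upwards [hpnn] with ω hω
  rw [ENNReal.toReal_ofReal hω]

lemma re_integral_ofReal_mul_cexp_neg_I_mul (hp : Integrable p μ) {θ : α → ℝ}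
    (hθ : AEStronglyMeasurable θ μ) :
    (∫ ω, (p ω : ℂ) * Complex.exp (-(Complex.I * θ ω)) ∂μ).re = ∫ ω, p ω * cos (θ ω) ∂μ := by
  have hint : Integrable (fun ω => Complex.exp (-(Complex.I * θ ω)) * p ω) μ := by
    refine hp.ofReal.bdd_mul (c := 1) ?_ (.of_forall fun ω => ?_)
    · exact Complex.continuous_exp.comp_aestronglyMeasurable
        ((Complex.continuous_ofReal.comp_aestronglyMeasurable hθ).const_mul Complex.I).neg
    · rw [Complex.norm_exp]
      simp
  simp_rw [mul_comm (p _ : ℂ)] at hint ⊢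
  rw [← RCLike.re_to_complex, ← integral_re hint]
  refine integral_congr_ae (.of_forall fun ω => ?_)
  simp [Complex.mul_re, Complex.exp_re, Complex.exp_im, mul_comm]

end Density

section UniformPhase

variable {E : Type*} [NormedAddCommGroup E] [NormedSpace ℝ E]

lemma isProbabilityMeasure_inv_smul_restrict_Icc {a b : ℝ} (hab : a < b) :
    IsProbabilityMeasure ((ENNReal.ofReal (b - a))⁻¹ • volume.restrict (Set.Icc a b)) := by
  constructor
  rw [Measure.smul_apply, Measure.restrict_apply_univ, volume_Icc, smul_eq_mul,
    ENNReal.inv_mul_cancel (by simpa using hab) ENNReal.ofReal_ne_top]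

lemma integral_inv_smul_restrict_Icc {a b : ℝ} (hab : a ≤ b) (f : ℝ → E) :
    ∫ x, f x ∂((ENNReal.ofReal (b - a))⁻¹ • volume.restrict (Set.Icc a b)) =
      (b - a)⁻¹ • ∫ x in a..b, f x := by
  rw [integral_smul_measure, ENNReal.toReal_inv, ENNReal.toReal_ofReal (sub_nonneg.2 hab),
    intervalIntegral.integral_of_le hab, integral_Icc_eq_integral_Ioc]

lemma abs_two_mul_cos_mul_cos_le (x y : ℝ) : |2 * cos x * cos y| ≤ 2 := by
  simpa [abs_mul] using mul_le_mul (mul_le_of_le_one_right zero_le_two (abs_cos_le_one x))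
    (abs_cos_le_one y) (abs_nonneg _) zero_le_two

lemma integral_two_mul_cos_add_mul_cos_add (a c : ℝ) :
    ∫ b in (0 : ℝ)..2 * π, 2 * cos (a + b) * cos (c + b) = 2 * π * cos (a - c) := by
  have hsplit : ∀ b, 2 * cos (a + b) * cos (c + b) = cos (a - c) + cos (2 * b + (a + c)) := by
    intro b
    rw [two_mul_cos_mul_cos]
    ring_nf
  have hmean : ∫ b in (0 : ℝ)..2 * π, cos (2 * b + (a + c)) = 0 := by
    rw [intervalIntegral.integral_comp_mul_add _ two_ne_zero, integral_cos,
      show 2 * (2 * π) + (a + c) = (a + c) + (2 : ℕ) * (2 * π) by ring, sin_add_nat_mul_two_pi]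
    simp
  simp_rw [hsplit]
  rw [intervalIntegral.integral_add intervalIntegrable_const
    ((by fun_prop : Continuous fun b => cos (2 * b + (a + c))).intervalIntegrable _ _), hmean]
  simp

lemma integral_two_mul_cos_add_mul_cos_add_uniform (a c : ℝ) :
    ∫ b, 2 * cos (a + b) * cos (c + b)
      ∂((ENNReal.ofReal (2 * π))⁻¹ • volume.restrict (Set.Icc 0 (2 * π))) = cos (a - c) := by
  have := integral_inv_smul_restrict_Icc (a := 0) (b := 2 * π) (by positivity)
    fun b => 2 * cos (a + b) * cos (c + b)
  rw [sub_zero] at this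
  rw [this, integral_two_mul_cos_add_mul_cos_add, smul_eq_mul, ← mul_assoc,
    inv_mul_cancel₀ (by positivity), one_mul]

end UniformPhase

theorem stmt10 {d : ℕ}
    (k : EuclideanSpace ℝ (Fin d) → ℝ)
    (p : EuclideanSpace ℝ (Fin d) → ℝ)
    (hpnn : ∀ ω, 0 ≤ p ω) (hpint : ∫ ω, p ω = 1)
    (hk : ∀ u, (k u : ℂ) = ∫ ω, (p ω : ℂ) * Complex.exp (-(Complex.I * (⟪ω, u⟫ : ℝ))))
    (xi xj : EuclideanSpace ℝ (Fin d)) :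
    k (xi - xj) =
      ∫ v : EuclideanSpace ℝ (Fin d) × ℝ,
          2 * Real.cos (⟪v.1, xi⟫ + v.2) * Real.cos (⟪v.1, xj⟫ + v.2)
        ∂ (((volume : Measure (EuclideanSpace ℝ (Fin d))).withDensity
              fun ω => ENNReal.ofReal (p ω)).prod
            ((ENNReal.ofReal (2*π))⁻¹ • (volume : Measure ℝ).restrict (Set.Icc 0 (2*π)))) := by
  have hp : Integrable p := .of_integral_ne_zero (by simp [hpint])
  have := isProbabilityMeasure_withDensity_ofReal hpnn hpint
  have := isProbabilityMeasure_inv_smul_restrict_Icc (a := 0) (b := 2 * π) (by positivity)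
  rw [sub_zero] at this
  rw [integral_prod _ (.of_bound (by fun_prop) 2
    (.of_forall fun v => abs_two_mul_cos_mul_cos_le (⟪v.1, xi⟫ + v.2) (⟪v.1, xj⟫ + v.2)))]
  simp_rw [integral_two_mul_cos_add_mul_cos_add_uniform, ← inner_sub_right]
  simp_rw [integral_withDensity_ofReal hp.aemeasurable (.of_forall hpnn), smul_eq_mul]
  rw [← re_integral_ofReal_mul_cexp_neg_I_mul hp (θ := fun ω => ⟪ω, xi - xj⟫) (by fun_prop), ← hk,
    Complex.ofReal_re]
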